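/- Let Θ, ℋ, 𝒴 be finite sets and let θ, θ̃ (both Θ-valued), H (ℋ-valued), and Y (𝒴-valued) be random variables on a common probability space. Suppose k(· | ν, h) is a pmf on 𝒴 such that P(Y = y | θ = ν, H = h) = k(y | ν, h) whenever P(θ = ν, H = h) > 0, and suppose Y is conditionally independent of θ̃ given (θ, H). Let m(y | τ, h) = P(Y = y | θ̃ = τ, H = h) denote the conditional pmf of Y given (θ̃, H). Then, in [0,∞]: E[ D_KL( k(· | θ, H) ‖ m(· | θ̃, H) ) ] ≤ E[ D_KL( k(· | θ, H) ‖ k(· | θ̃, H) ) ]. That is, predicting with the posterior predictive given θ̃ incurs no more expected KL error than plugging θ̃ into the likelihood in place of θ. -/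

import Mathlib

/-!
Vanishing conditional mutual information makes the joint law of `(Y, θ̃)` given `(θ, H)` factor,
so `Y` still has law `k(·|θ,H)` after also conditioning on `θ̃`. Hence
`E[∑_y k(y|θ,H) F(θ̃,H,y)] = E[F(θ̃,H,Y)]` for every `F`. With `F = log (m / k(·|θ̃,H))`, the gap
between the two expected divergences is `E[log (m(Y|θ̃,H) / k(Y|θ̃,H))]`, which is the expected
divergence of `m(·|θ̃,H)` from `k(·|θ̃,H)`, nonnegative by Gibbs' inequality. If the right-hand
side is finite, absolute continuity of `k(·|θ,H)` with respect to both `k(·|θ̃,H)` and `m(·|θ̃,H)`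
holds on the support, so all divergences are real.
-/

open scoped Classical ENNReal

noncomputable section

/-- Probability of the event `X = a` under the pmf `p` on a finite sample space. -/
def pr {Ω : Type*} [Fintype Ω] (p : Ω → ℝ) {A : Type*} (X : Ω → A) (a : A) : ℝ :=
  ∑ ω, if X ω = a then p ω else 0

/-- Conditional pmf of `Y` given `X = a`, evaluated at `b` (with the convention `0/0 = 0`). -/
def condPr {Ω : Type*} [Fintype Ω] (p : Ω → ℝ) {A B : Type*}
    (Y : Ω → B) (X : Ω → A) (b : B) (a : A) : ℝ :=
  pr p (fun ω => (Y ω, X ω)) (b, a) / pr p X a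

/-- Shannon entropy of a random variable (in nats). -/
def entropy {Ω : Type*} [Fintype Ω] (p : Ω → ℝ) {A : Type*} [Fintype A] (X : Ω → A) : ℝ :=
  ∑ a, Real.negMulLog (pr p X a)

/-- Conditional mutual information `I(X;Y|Z) = H(X,Z) + H(Y,Z) - H(X,Y,Z) - H(Z)` (in nats). -/
def condMutualInfo {Ω : Type*} [Fintype Ω] (p : Ω → ℝ) {A B C : Type*}
    [Fintype A] [Fintype B] [Fintype C] (X : Ω → A) (Y : Ω → B) (Z : Ω → C) : ℝ :=
  entropy p (fun ω => (X ω, Z ω)) + entropy p (fun ω => (Y ω, Z ω))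
    - entropy p (fun ω => ((X ω, Y ω), Z ω)) - entropy p Z

/-- KL divergence between pmfs on a finite set, valued in `[0,∞]`. -/
def klDivF {A : Type*} [Fintype A] (p q : A → ℝ) : ℝ≥0∞ :=
  if ∀ a, q a = 0 → p a = 0 then ENNReal.ofReal (∑ a, p a * Real.log (p a / q a)) else ⊤

open Finset Real InformationTheory

section Gibbs

lemma mul_log_div_eq_sub_add_mul_klFun {f g : ℝ} (hfg : g = 0 → f = 0) :
    f * log (f / g) = f - g + g * klFun (f / g) := by
  rcases eq_or_ne g 0 with rfl | hg
  · simp [hfg rfl]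
  · rw [klFun_apply]
    field_simp
    ring

variable {A : Type*} [Fintype A] {f g : A → ℝ}

lemma sum_sub_sum_le_sum_mul_log_div (hf : ∀ a, 0 ≤ f a) (hg : ∀ a, 0 ≤ g a)
    (hfg : ∀ a, g a = 0 → f a = 0) :
    ∑ a, f a - ∑ a, g a ≤ ∑ a, f a * log (f a / g a) := by
  simp_rw [mul_log_div_eq_sub_add_mul_klFun (hfg _), sum_add_distrib, sum_sub_distrib]
  have : 0 ≤ ∑ a, g a * klFun (f a / g a) :=
    sum_nonneg fun a _ => mul_nonneg (hg a) (klFun_nonneg (div_nonneg (hf a) (hg a)))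
  linarith

lemma sum_mul_log_div_nonneg (hf : ∀ a, 0 ≤ f a) (hg : ∀ a, 0 ≤ g a)
    (hfg : ∀ a, g a = 0 → f a = 0) (hsum : ∑ a, g a ≤ ∑ a, f a) :
    0 ≤ ∑ a, f a * log (f a / g a) := by
  linarith [sum_sub_sum_le_sum_mul_log_div hf hg hfg]

lemma eq_of_sum_mul_log_div_nonpos (hf : ∀ a, 0 ≤ f a) (hg : ∀ a, 0 ≤ g a)
    (hfg : ∀ a, g a = 0 → f a = 0) (hsum : ∑ a, g a ≤ ∑ a, f a)
    (h : ∑ a, f a * log (f a / g a) ≤ 0) : f = g := by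
  have hterm : ∀ a ∈ univ, 0 ≤ g a * klFun (f a / g a) := fun a _ =>
    mul_nonneg (hg a) (klFun_nonneg (div_nonneg (hf a) (hg a)))
  have hzero : ∑ a, g a * klFun (f a / g a) = 0 := by
    simp_rw [mul_log_div_eq_sub_add_mul_klFun (hfg _), sum_add_distrib, sum_sub_distrib] at h
    exact le_antisymm (by linarith) (sum_nonneg hterm)
  funext a
  rcases mul_eq_zero.mp ((sum_eq_zero_iff_of_nonneg hterm).mp hzero a (mem_univ a)) with h0 | h1
  · rw [h0, hfg a h0]
  · rw [klFun_eq_zero_iff (div_nonneg (hf a) (hg a))] at h1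
    exact (div_eq_one_iff_eq (fun h0 => by simp [h0, hfg a h0] at h1)).mp h1

lemma sum_mul_log_div_sub_sum_mul_log_div {h : A → ℝ} (hfg : ∀ a, g a = 0 → f a = 0)
    (hfh : ∀ a, h a = 0 → f a = 0) :
    ∑ a, f a * log (f a / h a) - ∑ a, f a * log (f a / g a) = ∑ a, f a * log (g a / h a) := by
  rw [← sum_sub_distrib]
  refine sum_congr rfl fun a _ => ?_
  rcases eq_or_ne (f a) 0 with hf | hf
  · simp [hf]
  · have hg : g a ≠ 0 := mt (hfg a) hf
    have hh : h a ≠ 0 := mt (hfh a) hf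
    rw [log_div hf hh, log_div hf hg, log_div hg hh]
    ring

end Gibbs

section Pr

variable {Ω : Type*} [Fintype Ω] {p : Ω → ℝ} {A B C : Type*}

lemma pr_nonneg (hp0 : ∀ ω, 0 ≤ p ω) (X : Ω → A) (a : A) : 0 ≤ pr p X a :=
  sum_nonneg fun ω _ => by split_ifs <;> simp [hp0 ω]

lemma sum_mul_comp_eq_sum_pr_mul [Fintype A] (p : Ω → ℝ) (X : Ω → A) (F : A → ℝ) :
    ∑ ω, p ω * F (X ω) = ∑ a, pr p X a * F a := by
  simp only [pr, sum_mul, ite_mul, zero_mul]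
  rw [sum_comm]
  simp

lemma sum_pr [Fintype A] (p : Ω → ℝ) (X : Ω → A) : ∑ a, pr p X a = ∑ ω, p ω := by
  simpa using (sum_mul_comp_eq_sum_pr_mul p X (fun _ => 1)).symm

lemma pr_le_pr_comp (hp0 : ∀ ω, 0 ≤ p ω) (X : Ω → A) (f : A → B) (a : A) :
    pr p X a ≤ pr p (fun ω => f (X ω)) (f a) := by
  refine sum_le_sum fun ω _ => ?_
  by_cases h : X ω = a
  · simp [h]
  · split_ifs <;> simp [hp0 ω]

lemma sum_pr_pair_left [Fintype A] (p : Ω → ℝ) (X : Ω → A) (Z : Ω → C) (c : C) :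
    ∑ a, pr p (fun ω => (X ω, Z ω)) (a, c) = pr p Z c := by
  unfold pr
  rw [sum_comm]
  refine sum_congr rfl fun ω _ => ?_
  by_cases h : Z ω = c <;> simp [h, Prod.ext_iff]

lemma pr_pair_eq_zero_of_pr_eq_zero (hp0 : ∀ ω, 0 ≤ p ω) (X : Ω → A) {Z : Ω → C} {c : C}
    (hc : pr p Z c = 0) (a : A) : pr p (fun ω => (X ω, Z ω)) (a, c) = 0 :=
  le_antisymm (hc ▸ pr_le_pr_comp hp0 (fun ω => (X ω, Z ω)) Prod.snd (a, c)) (pr_nonneg hp0 _ _)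

lemma le_pr_self (hp0 : ∀ ω, 0 ≤ p ω) (X : Ω → A) (ω : Ω) : p ω ≤ pr p X (X ω) := by
  unfold pr
  exact (single_le_sum (f := fun ω' => if X ω' = X ω then p ω' else 0)
    (fun ω' _ => by split_ifs <;> simp [hp0 ω']) (mem_univ ω)).trans_eq' (by simp)

lemma pr_self_ne_zero (hp0 : ∀ ω, 0 ≤ p ω) (X : Ω → A) {ω : Ω} (hω : p ω ≠ 0) :
    pr p X (X ω) ≠ 0 :=
  ((hp0 ω).lt_of_ne' hω |>.trans_le (le_pr_self hp0 X ω)).ne'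

lemma entropy_eq_neg_sum_mul_log [Fintype A] (p : Ω → ℝ) (X : Ω → A) :
    entropy p X = -∑ ω, p ω * log (pr p X (X ω)) := by
  rw [sum_mul_comp_eq_sum_pr_mul p X (fun a => log (pr p X a)), entropy, ← sum_neg_distrib]
  simp only [negMulLog, neg_mul]

lemma condMutualInfo_eq_sum_mul_log [Fintype A] [Fintype B] [Fintype C]
    (hp0 : ∀ ω, 0 ≤ p ω) (X : Ω → A) (Y : Ω → B) (Z : Ω → C) :
    condMutualInfo p X Y Z = ∑ ω, p ω * log (pr p (fun ω => ((X ω, Y ω), Z ω)) ((X ω, Y ω), Z ω)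
      * pr p Z (Z ω) / (pr p (fun ω => (X ω, Z ω)) (X ω, Z ω)
        * pr p (fun ω => (Y ω, Z ω)) (Y ω, Z ω))) := by
  simp only [condMutualInfo, entropy_eq_neg_sum_mul_log, sub_eq_add_neg, ← sum_neg_distrib,
    ← sum_add_distrib]
  refine sum_congr rfl fun ω _ => ?_
  rcases eq_or_ne (p ω) 0 with hp | hp
  · simp [hp]
  have hXYZ : pr p (fun ω => ((X ω, Y ω), Z ω)) ((X ω, Y ω), Z ω) ≠ 0 :=
    pr_self_ne_zero hp0 _ hp
  have hXZ : pr p (fun ω => (X ω, Z ω)) (X ω, Z ω) ≠ 0 := pr_self_ne_zero hp0 _ hp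
  have hYZ : pr p (fun ω => (Y ω, Z ω)) (Y ω, Z ω) ≠ 0 := pr_self_ne_zero hp0 _ hp
  have hZ : pr p Z (Z ω) ≠ 0 := pr_self_ne_zero hp0 _ hp
  rw [log_div (mul_ne_zero hXYZ hZ) (mul_ne_zero hXZ hYZ), log_mul hXYZ hZ,
    log_mul hXZ hYZ]
  ring

theorem pr_mul_pr_eq_of_condMutualInfo_eq_zero [Fintype A] [Fintype B] [Fintype C]
    (hp0 : ∀ ω, 0 ≤ p ω) {X : Ω → A} {Y : Ω → B} {Z : Ω → C}
    (h : condMutualInfo p X Y Z = 0) (a : A) (b : B) (c : C) :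
    pr p (fun ω => ((X ω, Y ω), Z ω)) ((a, b), c) * pr p Z c
      = pr p (fun ω => (X ω, Z ω)) (a, c) * pr p (fun ω => (Y ω, Z ω)) (b, c) := by
  set W := fun ω => ((X ω, Y ω), Z ω)
  set u := pr p (fun ω => (X ω, Z ω))
  set v := pr p (fun ω => (Y ω, Z ω))
  set w := pr p Z
  -- Under `g`, `X` and `Y` are conditionally independent given `Z`; the conditional mutual
  -- information is the divergence of the joint law from `g`, so Gibbs' equality case applies.
  set g : (A × B) × C → ℝ := fun x => u (x.1.1, x.2) * v (x.1.2, x.2) / w x.2 with hg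
  have hu (x : (A × B) × C) : pr p W x ≤ u (x.1.1, x.2) :=
    pr_le_pr_comp hp0 W (fun x => (x.1.1, x.2)) x
  have hv (x : (A × B) × C) : pr p W x ≤ v (x.1.2, x.2) :=
    pr_le_pr_comp hp0 W (fun x => (x.1.2, x.2)) x
  have hw (x : (A × B) × C) : pr p W x ≤ w x.2 := pr_le_pr_comp hp0 W Prod.snd x
  have hg0 (x : (A × B) × C) : 0 ≤ g x := by
    have := pr_nonneg hp0 Z x.2
    have := pr_nonneg hp0 (fun ω => (X ω, Z ω)) (x.1.1, x.2)
    have := pr_nonneg hp0 (fun ω => (Y ω, Z ω)) (x.1.2, x.2)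
    positivity
  have hfg (x : (A × B) × C) (hx : g x = 0) : pr p W x = 0 := by
    simp only [hg, div_eq_zero_iff, mul_eq_zero] at hx
    refine le_antisymm ?_ (pr_nonneg hp0 W x)
    rcases hx with (hx | hx) | hx
    exacts [hx ▸ hu x, hx ▸ hv x, hx ▸ hw x]
  have hsum : ∑ x, g x ≤ ∑ x, pr p W x := by
    have hc (c : C) : ∑ x : A × B, g (x, c) = w c := by
      simp only [hg, Fintype.sum_prod_type, ← sum_div, ← sum_mul, ← mul_sum, u, v,
        sum_pr_pair_left]
      exact mul_self_div_self (w c)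
    simp only [Fintype.sum_prod_type_right, hc, w, sum_pr, le_refl]
  have hkl : ∑ x, pr p W x * log (pr p W x / g x) ≤ 0 := by
    rw [← sum_mul_comp_eq_sum_pr_mul p W (fun x => log (pr p W x / g x)), ← h,
      condMutualInfo_eq_sum_mul_log hp0]
    simp only [hg, div_div_eq_mul_div]
    exact le_rfl
  have heq := congrFun (eq_of_sum_mul_log_div_nonpos (pr_nonneg hp0 W) hg0 hfg hsum hkl)
    ((a, b), c)
  rcases eq_or_ne (w c) 0 with hc | hc
  · simp [hc, u, pr_pair_eq_zero_of_pr_eq_zero hp0 X hc a]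
  · rw [heq, hg]
    field_simp

variable {D : Type*}

-- Conditionally on `(T, Z)`, `Y` is distributed as `κ Z`.
def HasCondKernel (p : Ω → ℝ) (Y : Ω → B) (T : Ω → D) (Z : Ω → C) (κ : C → B → ℝ) : Prop :=
  ∀ b d c, pr p (fun ω => ((Y ω, T ω), Z ω)) ((b, d), c)
    = κ c b * pr p (fun ω => (T ω, Z ω)) (d, c)

theorem hasCondKernel_of_condMutualInfo_eq_zero [Fintype B] [Fintype C] [Fintype D]
    (hp0 : ∀ ω, 0 ≤ p ω) {Y : Ω → B} {T : Ω → D} {Z : Ω → C} {κ : C → B → ℝ}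
    (hκ : ∀ b c, 0 < pr p Z c → condPr p Y Z b c = κ c b)
    (hci : condMutualInfo p Y T Z = 0) : HasCondKernel p Y T Z κ := by
  intro b d c
  rcases (pr_nonneg hp0 Z c).eq_or_lt with hc | hc
  · rw [pr_pair_eq_zero_of_pr_eq_zero hp0 (fun ω => (Y ω, T ω)) hc.symm,
      pr_pair_eq_zero_of_pr_eq_zero hp0 T hc.symm, mul_zero]
  · rw [← hκ b c hc, condPr, div_mul_eq_mul_div, eq_div_iff hc.ne']
    exact pr_mul_pr_eq_of_condMutualInfo_eq_zero hp0 hci b d c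

theorem sum_mul_sum_kernel_mul_eq [Fintype B] [Fintype C] [Fintype D]
    {Y : Ω → B} {T : Ω → D} {Z : Ω → C} {κ : C → B → ℝ}
    (hfac : HasCondKernel p Y T Z κ)
    (F : D → C → B → ℝ) :
    ∑ ω, p ω * ∑ b, κ (Z ω) b * F (T ω) (Z ω) b = ∑ ω, p ω * F (T ω) (Z ω) (Y ω) := by
  calc ∑ ω, p ω * ∑ b, κ (Z ω) b * F (T ω) (Z ω) b
      = ∑ x, pr p (fun ω => (T ω, Z ω)) x * ∑ b, κ x.2 b * F x.1 x.2 b :=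
        sum_mul_comp_eq_sum_pr_mul p (fun ω => (T ω, Z ω)) fun x => ∑ b, κ x.2 b * F x.1 x.2 b
    _ = ∑ x, pr p (fun ω => ((Y ω, T ω), Z ω)) x * F x.1.2 x.2 x.1.1 := by
        simp only [Fintype.sum_prod_type, mul_sum]
        conv_rhs => rw [sum_comm]
        refine sum_congr rfl fun d _ => ?_
        conv_rhs => rw [sum_comm]
        exact sum_congr rfl fun c _ => sum_congr rfl fun b _ => by rw [hfac]; ring
    _ = ∑ ω, p ω * F (T ω) (Z ω) (Y ω) :=
        (sum_mul_comp_eq_sum_pr_mul p (fun ω => ((Y ω, T ω), Z ω)) fun x => F x.1.2 x.2 x.1.1).symm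


lemma condPr_nonneg (hp0 : ∀ ω, 0 ≤ p ω) (Y : Ω → B) (S : Ω → C) (b : B) (c : C) :
    0 ≤ condPr p Y S b c :=
  div_nonneg (pr_nonneg hp0 _ _) (pr_nonneg hp0 _ _)

lemma sum_condPr [Fintype B] {Y : Ω → B} {S : Ω → C} {c : C} (hc : pr p S c ≠ 0) :
    ∑ b, condPr p Y S b c = 1 := by
  simp only [condPr, ← sum_div, sum_pr_pair_left, div_self hc]

lemma pr_pair_eq_condPr_mul [Fintype B] (hp0 : ∀ ω, 0 ≤ p ω) (Y : Ω → B) (S : Ω → C)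
    (b : B) (c : C) : pr p (fun ω => (Y ω, S ω)) (b, c) = condPr p Y S b c * pr p S c := by
  rcases eq_or_ne (pr p S c) 0 with hc | hc
  · rw [hc, mul_zero, pr_pair_eq_zero_of_pr_eq_zero hp0 Y hc]
  · rw [condPr, div_mul_cancel₀ _ hc]

theorem sum_mul_log_condPr_div_nonneg [Fintype B] [Fintype C] (hp0 : ∀ ω, 0 ≤ p ω)
    {Y : Ω → B} {S : Ω → C} {κ : C → B → ℝ} (hκ0 : ∀ c b, 0 ≤ κ c b)
    (hκ1 : ∀ c, ∑ b, κ c b ≤ 1)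
    (hac : ∀ c b, κ c b = 0 → pr p (fun ω => (Y ω, S ω)) (b, c) = 0) :
    0 ≤ ∑ ω, p ω * log (condPr p Y S (Y ω) (S ω) / κ (S ω) (Y ω)) := by
  rw [sum_mul_comp_eq_sum_pr_mul p (fun ω => (Y ω, S ω))
    fun x => log (condPr p Y S x.1 x.2 / κ x.2 x.1), Fintype.sum_prod_type_right]
  refine sum_nonneg fun c _ => ?_
  simp only [pr_pair_eq_condPr_mul hp0, mul_right_comm _ (pr p S c), ← sum_mul]
  rcases eq_or_ne (pr p S c) 0 with hc | hc
  · simp [hc]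
  refine mul_nonneg (sum_mul_log_div_nonneg (condPr_nonneg hp0 Y S · c) (hκ0 c)
    (fun b hb => by rw [condPr, hac c b hb, zero_div]) ((hκ1 c).trans (sum_condPr hc).ge))
    (pr_nonneg hp0 S c)

end Pr

section ENNReal

variable {ι A : Type*} [Fintype ι] [Fintype A] {w : ι → ℝ}

lemma sum_ofReal_mul_klDivF_eq {f g : ι → A → ℝ}
    (hac : ∀ i, w i ≠ 0 → ∀ a, g i a = 0 → f i a = 0) :
    ∑ i, ENNReal.ofReal (w i) * klDivF (f i) (g i)
      = ∑ i, ENNReal.ofReal (w i) * ENNReal.ofReal (∑ a, f i a * log (f i a / g i a)) := by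
  refine sum_congr rfl fun i _ => ?_
  rcases eq_or_ne (w i) 0 with hi | hi
  · simp [hi]
  · rw [klDivF, if_pos (hac i hi)]

lemma sum_ofReal_mul_klDivF_eq_top {f g : ι → A → ℝ} {i : ι} (hi : 0 < w i) {a : A}
    (hg : g i a = 0) (hf : f i a ≠ 0) :
    ∑ i, ENNReal.ofReal (w i) * klDivF (f i) (g i) = ⊤ := by
  refine ENNReal.sum_eq_top.mpr ⟨i, mem_univ i, ?_⟩
  rw [klDivF, if_neg fun h => hf (h a hg), ENNReal.mul_top (by simpa using hi)]

lemma sum_ofReal_mul_ofReal_le {L R : ι → ℝ} (hw : ∀ i, 0 ≤ w i)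
    (hL : ∀ i, w i ≠ 0 → 0 ≤ L i) (hR : ∀ i, w i ≠ 0 → 0 ≤ R i)
    (h : ∑ i, w i * L i ≤ ∑ i, w i * R i) :
    ∑ i, ENNReal.ofReal (w i) * ENNReal.ofReal (L i)
      ≤ ∑ i, ENNReal.ofReal (w i) * ENNReal.ofReal (R i) := by
  have hnonneg {F : ι → ℝ} (hF : ∀ i, w i ≠ 0 → 0 ≤ F i) (i : ι) : 0 ≤ w i * F i := by
    rcases eq_or_ne (w i) 0 with hi | hi
    · simp [hi]
    · exact mul_nonneg (hw i) (hF i hi)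
  simp only [← ENNReal.ofReal_mul (hw _)]
  rw [← ENNReal.ofReal_sum_of_nonneg fun i _ => hnonneg hL i,
    ← ENNReal.ofReal_sum_of_nonneg fun i _ => hnonneg hR i]
  exact ENNReal.ofReal_le_ofReal h

end ENNReal

section PlugIn

variable {Ω Θ ℋ 𝒴 : Type*} [Fintype Ω] [Fintype Θ] [Fintype ℋ] [Fintype 𝒴] {p : Ω → ℝ}
  {θ θt : Ω → Θ} {H : Ω → ℋ} {Y : Ω → 𝒴} {k : Θ → ℋ → 𝒴 → ℝ}

lemma pr_pair_eq_sum_kernel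
    (hfac : HasCondKernel p Y θt (fun ω => (θ ω, H ω)) fun z y => k z.1 z.2 y)
    (y : 𝒴) (s : Θ × ℋ) :
    pr p (fun ω => (Y ω, (θt ω, H ω))) (y, s)
      = ∑ ω, if (θt ω, H ω) = s then p ω * k (θ ω) (H ω) y else 0 := by
  have := sum_mul_sum_kernel_mul_eq hfac fun τ z b => if (τ, z.2) = s ∧ b = y then 1 else 0
  rw [pr]
  convert this.symm using 2 with ω _ ω
  · by_cases hs : (θt ω, H ω) = s <;> simp [hs, Prod.ext_iff, and_comm]
  · by_cases hs : (θt ω, H ω) = s <;> simp [hs]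

lemma kernel_eq_zero_of_condPr_eq_zero (hp0 : ∀ ω, 0 ≤ p ω) (hk0 : ∀ ν h y, 0 ≤ k ν h y)
    (hfac : HasCondKernel p Y θt (fun ω => (θ ω, H ω)) fun z y => k z.1 z.2 y)
    {ω : Ω} (hω : p ω ≠ 0) {y : 𝒴}
    (hy : condPr p Y (fun ω => (θt ω, H ω)) y (θt ω, H ω) = 0) : k (θ ω) (H ω) y = 0 := by
  have hS : pr p (fun ω => (θt ω, H ω)) (θt ω, H ω) ≠ 0 := pr_self_ne_zero hp0 _ hω
  have hterm : ∀ ω' ∈ univ, 0 ≤ if (θt ω', H ω') = (θt ω, H ω)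
      then p ω' * k (θ ω') (H ω') y else 0 := fun ω' _ => by
    split_ifs <;> simp [mul_nonneg (hp0 ω') (hk0 _ _ y)]
  rw [condPr, div_eq_zero_iff, or_iff_left hS, pr_pair_eq_sum_kernel hfac,
    sum_eq_zero_iff_of_nonneg hterm] at hy
  simpa [hω] using hy ω (mem_univ ω)

lemma pr_pair_eq_zero_of_kernel_eq_zero
    (hfac : HasCondKernel p Y θt (fun ω => (θ ω, H ω)) fun z y => k z.1 z.2 y)
    (hac : ∀ ω, p ω ≠ 0 → ∀ y, k (θt ω) (H ω) y = 0 → k (θ ω) (H ω) y = 0)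
    {s : Θ × ℋ} {y : 𝒴} (hs : k s.1 s.2 y = 0) :
    pr p (fun ω => (Y ω, (θt ω, H ω))) (y, s) = 0 := by
  rw [pr_pair_eq_sum_kernel hfac]
  refine sum_eq_zero fun ω _ => ?_
  split_ifs with hωs
  · rcases eq_or_ne (p ω) 0 with hω | hω
    · rw [hω, zero_mul]
    · rw [hac ω hω y (by rw [← hωs] at hs; exact hs), mul_zero]
  · rfl

lemma sum_mul_log_div_condPr_nonneg (hp0 : ∀ ω, 0 ≤ p ω)
    (hkpmf : ∀ ν h, (∀ y, 0 ≤ k ν h y) ∧ ∑ y, k ν h y = 1)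
    (hfac : HasCondKernel p Y θt (fun ω => (θ ω, H ω)) fun z y => k z.1 z.2 y)
    {ω : Ω} (hω : p ω ≠ 0) :
    0 ≤ ∑ y, k (θ ω) (H ω) y
      * log (k (θ ω) (H ω) y / condPr p Y (fun ω => (θt ω, H ω)) y (θt ω, H ω)) := by
  have hS : pr p (fun ω => (θt ω, H ω)) (θt ω, H ω) ≠ 0 := pr_self_ne_zero hp0 _ hω
  exact sum_mul_log_div_nonneg (hkpmf _ _).1 (condPr_nonneg hp0 _ _ · _)
    (fun y => kernel_eq_zero_of_condPr_eq_zero hp0 (fun ν h => (hkpmf ν h).1) hfac hω)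
    ((sum_condPr hS).trans (hkpmf _ _).2.symm).le

theorem sum_mul_kl_condPr_le_sum_mul_kl_kernel (hp0 : ∀ ω, 0 ≤ p ω)
    (hkpmf : ∀ ν h, (∀ y, 0 ≤ k ν h y) ∧ ∑ y, k ν h y = 1)
    (hfac : HasCondKernel p Y θt (fun ω => (θ ω, H ω)) fun z y => k z.1 z.2 y)
    (hac : ∀ ω, p ω ≠ 0 → ∀ y, k (θt ω) (H ω) y = 0 → k (θ ω) (H ω) y = 0) :
    ∑ ω, p ω * ∑ y, k (θ ω) (H ω) y
        * log (k (θ ω) (H ω) y / condPr p Y (fun ω => (θt ω, H ω)) y (θt ω, H ω))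
      ≤ ∑ ω, p ω * ∑ y, k (θ ω) (H ω) y * log (k (θ ω) (H ω) y / k (θt ω) (H ω) y) := by
  set m := fun (s : Θ × ℋ) y => condPr p Y (fun ω => (θt ω, H ω)) y s
  have hdiff (ω : Ω) : p ω * ∑ y, k (θ ω) (H ω) y * log (k (θ ω) (H ω) y / k (θt ω) (H ω) y)
      - p ω * ∑ y, k (θ ω) (H ω) y * log (k (θ ω) (H ω) y / m (θt ω, H ω) y)
      = p ω * ∑ y, k (θ ω) (H ω) y * log (m (θt ω, H ω) y / k (θt ω) (H ω) y) := by
    rcases eq_or_ne (p ω) 0 with hω | hω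
    · simp [hω]
    rw [← mul_sub, sum_mul_log_div_sub_sum_mul_log_div
      (fun y => kernel_eq_zero_of_condPr_eq_zero hp0 (fun ν h => (hkpmf ν h).1) hfac hω)
      (hac ω hω)]
  have hgain : 0 ≤ ∑ ω, p ω * ∑ y, k (θ ω) (H ω) y * log (m (θt ω, H ω) y / k (θt ω) (H ω) y) := by
    rw [sum_mul_sum_kernel_mul_eq hfac fun τ z y => log (m (τ, z.2) y / k τ z.2 y)]
    exact sum_mul_log_condPr_div_nonneg hp0 (fun (s : Θ × ℋ) => (hkpmf s.1 s.2).1)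
      (fun s => (hkpmf s.1 s.2).2.le) fun s y => pr_pair_eq_zero_of_kernel_eq_zero hfac hac
  have := sum_congr rfl fun ω (_ : ω ∈ univ) => hdiff ω
  rw [sum_sub_distrib] at this
  linarith

end PlugIn

theorem statement9_general {Ω Θ ℋ 𝒴 : Type*} [Fintype Ω] [Fintype Θ] [Fintype ℋ] [Fintype 𝒴]
    (p : Ω → ℝ) (hp0 : ∀ ω, 0 ≤ p ω)
    (θ θt : Ω → Θ) (H : Ω → ℋ) (Y : Ω → 𝒴)
    (k : Θ → ℋ → 𝒴 → ℝ)
    (hkpmf : ∀ ν h, (∀ y, 0 ≤ k ν h y) ∧ ∑ y, k ν h y = 1)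
    (hk : ∀ ν h y, 0 < pr p (fun ω => (θ ω, H ω)) (ν, h) →
      condPr p Y (fun ω => (θ ω, H ω)) y (ν, h) = k ν h y)
    (hci : condMutualInfo p Y θt (fun ω => (θ ω, H ω)) = 0) :
    ∑ ω, ENNReal.ofReal (p ω) *
        klDivF (k (θ ω) (H ω))
          (fun y => condPr p Y (fun ω' => (θt ω', H ω')) y (θt ω, H ω))
      ≤ ∑ ω, ENNReal.ofReal (p ω) *
          klDivF (k (θ ω) (H ω)) (k (θt ω) (H ω)) := by
  have hfac : HasCondKernel p Y θt (fun ω => (θ ω, H ω)) fun z y => k z.1 z.2 y :=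
    hasCondKernel_of_condMutualInfo_eq_zero hp0 (fun y z hz => hk z.1 z.2 y hz) hci
  by_cases hac : ∀ ω, p ω ≠ 0 → ∀ y, k (θt ω) (H ω) y = 0 → k (θ ω) (H ω) y = 0
  · rw [sum_ofReal_mul_klDivF_eq fun ω hω y =>
        kernel_eq_zero_of_condPr_eq_zero hp0 (fun ν h => (hkpmf ν h).1) hfac hω,
      sum_ofReal_mul_klDivF_eq hac]
    exact sum_ofReal_mul_ofReal_le hp0
      (fun ω hω => sum_mul_log_div_condPr_nonneg hp0 hkpmf hfac hω)
      (fun ω hω => sum_mul_log_div_nonneg (hkpmf _ _).1 (hkpmf _ _).1 (hac ω hω)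
        ((hkpmf _ _).2.trans (hkpmf _ _).2.symm).le)
      (sum_mul_kl_condPr_le_sum_mul_kl_kernel hp0 hkpmf hfac hac)
  · push Not at hac
    obtain ⟨ω, hω, y, hy0, hy⟩ := hac
    exact le_top.trans_eq (sum_ofReal_mul_klDivF_eq_top ((hp0 ω).lt_of_ne' hω) hy0 hy).symm

/-- posterior predictive beats the plug-in change of measure. -/
theorem statement9 {Ω Θ ℋ 𝒴 : Type*} [Fintype Ω] [Fintype Θ] [Fintype ℋ] [Fintype 𝒴]
    (p : Ω → ℝ) (hp0 : ∀ ω, 0 ≤ p ω) (hp1 : ∑ ω, p ω = 1)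
    (θ θt : Ω → Θ) (H : Ω → ℋ) (Y : Ω → 𝒴)
    (k : Θ → ℋ → 𝒴 → ℝ)
    (hkpmf : ∀ ν h, (∀ y, 0 ≤ k ν h y) ∧ ∑ y, k ν h y = 1)
    (hk : ∀ ν h y, 0 < pr p (fun ω => (θ ω, H ω)) (ν, h) →
      condPr p Y (fun ω => (θ ω, H ω)) y (ν, h) = k ν h y)
    (hci : condMutualInfo p Y θt (fun ω => (θ ω, H ω)) = 0) :
    ∑ ω, ENNReal.ofReal (p ω) *
        klDivF (k (θ ω) (H ω))
          (fun y => condPr p Y (fun ω' => (θt ω', H ω')) y (θt ω, H ω))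
      ≤ ∑ ω, ENNReal.ofReal (p ω) *
          klDivF (k (θ ω) (H ω)) (k (θt ω) (H ω)) :=
  statement9_general p hp0 θ θt H Y k hkpmf hk hci

end
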